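/- arXiv:1306.4233 — 2 statements merged into one kernel-verified Lean document; each statement's English description precedes it below -/
import Mathlib

section
/- Let (Σ, g) be a compact Riemannian manifold, V a positive smooth function and u a smooth function on Σ with V² = 1 + u² + |∇V|² pointwise. Then (∫_Σ V dμ)² ≥ (∫_Σ 1 dμ)² + (∫_Σ u dμ)². -/
/-!
Pack the pair `(1, u)` into the complex function `1 + u i`. The relation gives `|1 + u i| ≤ V`
pointwise, so `|∫ (1 + u i)| ≤ ∫ V`, and the left side is the Euclidean length of
`(∫ 1, ∫ u)`.
-/

open MeasureTheory Complex

theorem sq_integral_add_sq_integral_le_sq_integral {α : Type*} [MeasurableSpace α]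
    {μ : Measure α} {f g V : α → ℝ} (hf : Integrable f μ) (hg : Integrable g μ)
    (hV : Integrable V μ) (hfgV : ∀ᵐ x ∂μ, √(f x ^ 2 + g x ^ 2) ≤ V x) :
    (∫ x, f x ∂μ) ^ 2 + (∫ x, g x ∂μ) ^ 2 ≤ (∫ x, V x ∂μ) ^ 2 := by
  have hintegral :
      ∫ x, (f x + g x * I : ℂ) ∂μ = (∫ x, f x ∂μ : ℝ) + (∫ x, g x ∂μ : ℝ) * I := by
    rw [integral_add (by exact hf.ofReal) (by exact hg.ofReal.mul_const I), integral_mul_const,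
      integral_complex_ofReal, integral_complex_ofReal]
  have hnorm : ‖∫ x, (f x + g x * I : ℂ) ∂μ‖ ≤ ∫ x, V x ∂μ :=
    norm_integral_le_of_norm_le hV (hfgV.mono fun x hx => by rwa [norm_add_mul_I])
  rw [hintegral, norm_add_mul_I] at hnorm
  calc (∫ x, f x ∂μ) ^ 2 + (∫ x, g x ∂μ) ^ 2
      = √((∫ x, f x ∂μ) ^ 2 + (∫ x, g x ∂μ) ^ 2) ^ 2 :=
        (Real.sq_sqrt (by positivity)).symm
    _ ≤ (∫ x, V x ∂μ) ^ 2 := pow_le_pow_left₀ (Real.sqrt_nonneg _) hnorm 2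

theorem stmt_5_general {M : Type*} [TopologicalSpace M] [CompactSpace M] [MeasurableSpace M]
    [BorelSpace M] (μ : Measure M) [IsFiniteMeasure μ]
    (V u w : M → ℝ) (hV : Continuous V) (hu : Continuous u)
    (hVpos : ∀ x, 0 < V x)
    (hrel : ∀ x, V x ^ 2 = 1 + u x ^ 2 + w x ^ 2) :
    (∫ x, (1 : ℝ) ∂μ) ^ 2 + (∫ x, u x ∂μ) ^ 2 ≤ (∫ x, V x ∂μ) ^ 2 := by
  have hbound : ∀ x, √(1 ^ 2 + u x ^ 2) ≤ V x := fun x =>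
    Real.sqrt_le_iff.mpr ⟨(hVpos x).le, by nlinarith [hrel x, sq_nonneg (w x)]⟩
  exact sq_integral_add_sq_integral_le_sq_integral (integrable_const 1)
    (hu.integrable_of_hasCompactSupport (.of_compactSpace u))
    (hV.integrable_of_hasCompactSupport (.of_compactSpace V)) (.of_forall hbound)

open MeasureTheory in
theorem stmt_5 {M : Type*} [TopologicalSpace M] [CompactSpace M] [MeasurableSpace M]
    [BorelSpace M] (μ : Measure M) [IsFiniteMeasure μ]
    (V u w : M → ℝ) (hV : Continuous V) (hu : Continuous u) (hw : Continuous w)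
    (hVpos : ∀ x, 0 < V x)
    (hrel : ∀ x, V x ^ 2 = 1 + u x ^ 2 + w x ^ 2) :
    (∫ x, (1 : ℝ) ∂μ) ^ 2 + (∫ x, u x ∂μ) ^ 2 ≤ (∫ x, V x ∂μ) ^ 2 :=
  stmt_5_general μ V u w hV hu hVpos hrel
end

section
/- Let h be a real symmetric (n-1)×(n-1) matrix and define P̃^{stjl} = (1/2) δ^{i₁⋯i_{2k-2} s t}_{j₁⋯j_{2k-2} j l} h_{i₁}^{j₁} ⋯ h_{i_{2k-2}}^{j_{2k-2}} (indices raised with the identity metric). Then 2 P̃^{stjl} h_{sj} = (2k-1)! · (T_{2k-1})^t_l, where T_{2k-1} is the (2k-1)-th Newton transformation of h. -/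
/-!
The generalized Kronecker delta is a determinant, so moving its last slot `(t, l)` to the front
(the same cyclic permutation of rows and columns) leaves it unchanged. Contracting
`δ^{I s t}_{J j l} h_I^J` with `h_s^j` then just absorbs `s` and `j` into longer multi-indices, which
is the sum defining `(2k-1)! T_{2k-1}`; the factor `2` cancels the `1/2` in `P̃`.
-/

def genKronecker {ι R : Type*} [DecidableEq ι] [CommRing R] {m : ℕ} (I J : Fin m → ι) : R :=
  (Matrix.of fun a b => if I a = J b then (1 : R) else 0).det

section

variable {ι R : Type*} [DecidableEq ι] [CommRing R] {m : ℕ}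

theorem genKronecker_comp_perm (σ : Equiv.Perm (Fin m)) (I J : Fin m → ι) :
    (genKronecker (I ∘ σ) (J ∘ σ) : R) = genKronecker I J :=
  Matrix.det_submatrix_equiv_self σ (Matrix.of fun a b => if I a = J b then (1 : R) else 0)

theorem genKronecker_snoc (I J : Fin m → ι) (t l : ι) :
    (genKronecker (Fin.snoc (α := fun _ => ι) I t) (Fin.snoc (α := fun _ => ι) J l) : R) =
      genKronecker (Fin.cons (α := fun _ => ι) t I) (Fin.cons (α := fun _ => ι) l J) := by
  rw [Fin.snoc_eq_cons_rotate, Fin.snoc_eq_cons_rotate]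
  exact genKronecker_comp_perm _ _ _

end

theorem Fin.sum_sum_snoc {ι M : Type*} [Fintype ι] [AddCommMonoid M] {p : ℕ}
    (F : (Fin (p + 1) → ι) → M) :
    ∑ s : ι, ∑ ii : Fin p → ι, F (Fin.snoc ii s) = ∑ II, F II := by
  rw [← Fintype.sum_equiv (Fin.snocEquiv fun _ => ι) _ F fun _ => rfl, Fintype.sum_prod_type]
  rfl

theorem Fin.sum_sum_snoc_snoc {ι M : Type*} [Fintype ι] [AddCommMonoid M] {p : ℕ}
    (G : (Fin (p + 1) → ι) → (Fin (p + 1) → ι) → M) :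
    ∑ s : ι, ∑ ii : Fin p → ι, ∑ j : ι, ∑ jj : Fin p → ι, G (Fin.snoc ii s) (Fin.snoc jj j) =
      ∑ II, ∑ JJ, G II JJ := by
  simp only [Fin.sum_sum_snoc (G _)]
  exact Fin.sum_sum_snoc fun II => ∑ JJ, G II JJ

theorem Fin.prod_snoc_apply {ι M : Type*} [CommMonoid M] {p : ℕ} (h : ι → ι → M)
    (ii jj : Fin p → ι) (s j : ι) :
    ∏ a : Fin (p + 1), h (Fin.snoc (α := fun _ => ι) ii s a) (Fin.snoc (α := fun _ => ι) jj j a) =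
      (∏ a, h (ii a) (jj a)) * h s j := by
  simp [Fin.prod_univ_castSucc]

theorem Fin.dite_lt_eq_snoc_snoc {α : Type*} {N p : ℕ} (hN : N = p + 2) (ii : Fin p → α)
    (s t : α) (a : Fin N) [Decidable (a.1 < p)] [Decidable (a.1 = p)] :
    (if ha : a.1 < p then ii ⟨a.1, ha⟩ else if a.1 = p then s else t) =
      Fin.snoc (α := fun _ => α) (Fin.snoc (α := fun _ => α) ii s) t (a.cast hN) := by
  simp only [Fin.snoc, Fin.castLT, Fin.val_cast]
  split_ifs <;> first | rfl | omega

theorem sum_genKronecker_snoc_snoc_mul {ι R : Type*} [Fintype ι] [DecidableEq ι] [CommRing R]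
    (p : ℕ) (h : ι → ι → R) (t l : ι) :
    ∑ s, ∑ j, (∑ ii : Fin p → ι, ∑ jj : Fin p → ι,
        genKronecker (Fin.snoc (α := fun _ => ι) (Fin.snoc ii s) t)
          (Fin.snoc (α := fun _ => ι) (Fin.snoc jj j) l) * ∏ a, h (ii a) (jj a)) * h s j =
      ∑ II : Fin (p + 1) → ι, ∑ JJ : Fin (p + 1) → ι,
        genKronecker (Fin.cons (α := fun _ => ι) t II) (Fin.cons (α := fun _ => ι) l JJ) *
          ∏ a, h (II a) (JJ a) := by
  simp_rw [Finset.sum_mul, mul_assoc, ← Fin.prod_snoc_apply h, genKronecker_snoc]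
  calc _ = ∑ s, ∑ ii : Fin p → ι, ∑ j, ∑ jj : Fin p → ι,
          genKronecker (Fin.cons (α := fun _ => ι) t (Fin.snoc ii s))
            (Fin.cons (α := fun _ => ι) l (Fin.snoc jj j)) *
          ∏ a, h (Fin.snoc (α := fun _ => ι) ii s a) (Fin.snoc (α := fun _ => ι) jj j a) :=
        Finset.sum_congr rfl fun _ _ => Finset.sum_comm
    _ = _ := Fin.sum_sum_snoc_snoc fun II JJ =>
          genKronecker (Fin.cons (α := fun _ => ι) t II) (Fin.cons (α := fun _ => ι) l JJ) *
            ∏ a, h (II a) (JJ a)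

theorem stmt_11_general (n k : ℕ) (hk : 1 ≤ k)
    (h : Matrix (Fin (n - 1)) (Fin (n - 1)) ℝ) :
    let δ : (m : ℕ) → (Fin m → Fin (n - 1)) → (Fin m → Fin (n - 1)) → ℝ := fun m I J =>
      Matrix.det (Matrix.of fun a b : Fin m => if I a = J b then (1 : ℝ) else 0)
    let P : Fin (n - 1) → Fin (n - 1) → Fin (n - 1) → Fin (n - 1) → ℝ := fun s t j l =>
      (1 / 2 : ℝ) *
        ∑ ii : Fin (2 * k - 2) → Fin (n - 1), ∑ jj : Fin (2 * k - 2) → Fin (n - 1),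
          δ (2 * k)
            (fun a => if ha : a.1 < 2 * k - 2 then ii ⟨a.1, ha⟩
              else if a.1 = 2 * k - 2 then s else t)
            (fun a => if ha : a.1 < 2 * k - 2 then jj ⟨a.1, ha⟩
              else if a.1 = 2 * k - 2 then j else l) *
          ∏ a : Fin (2 * k - 2), h (ii a) (jj a)
    let T : Fin (n - 1) → Fin (n - 1) → ℝ := fun t l =>
      (1 / ((2 * k - 1).factorial : ℝ)) *
        ∑ ii : Fin (2 * k - 1) → Fin (n - 1), ∑ jj : Fin (2 * k - 1) → Fin (n - 1),
          δ (2 * k - 1 + 1) (Fin.cons t ii) (Fin.cons l jj) *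
          ∏ a : Fin (2 * k - 1), h (ii a) (jj a)
    ∀ t l, 2 * ∑ s, ∑ j, P s t j l * h s j = ((2 * k - 1).factorial : ℝ) * T t l := by
  intro δ P T t l
  obtain ⟨q, rfl⟩ : ∃ q, k = q + 1 := ⟨k - 1, by omega⟩
  have e0 : 2 * (q + 1) = 2 * q + 2 := by ring
  have e1 : 2 * q + 2 - 2 = 2 * q := by omega
  have e2 : 2 * q + 2 - 1 = 2 * q + 1 := by omega
  have hC : ((2 * q + 1).factorial : ℝ) ≠ 0 := by positivity
  have half : ∀ x : ℝ, 2 * (1 / 2 * x) = x := fun x => by ring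
  simp only [δ, P, T, e0, e1, e2, Fin.dite_lt_eq_snoc_snoc e0]
  simp only [mul_assoc (1 / 2 : ℝ), ← Finset.mul_sum, half]
  rw [← mul_assoc, mul_one_div_cancel hC, one_mul]
  exact sum_genKronecker_snoc_snoc_mul (2 * q) h t l

theorem stmt_11 (n k : ℕ) (hk : 1 ≤ k) (h2k : 2 * k ≤ n - 1)
    (h : Matrix (Fin (n - 1)) (Fin (n - 1)) ℝ) (hh : h.IsHermitian) :
    let δ : (m : ℕ) → (Fin m → Fin (n - 1)) → (Fin m → Fin (n - 1)) → ℝ := fun m I J =>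
      Matrix.det (Matrix.of fun a b : Fin m => if I a = J b then (1 : ℝ) else 0)
    let P : Fin (n - 1) → Fin (n - 1) → Fin (n - 1) → Fin (n - 1) → ℝ := fun s t j l =>
      (1 / 2 : ℝ) *
        ∑ ii : Fin (2 * k - 2) → Fin (n - 1), ∑ jj : Fin (2 * k - 2) → Fin (n - 1),
          δ (2 * k)
            (fun a => if ha : a.1 < 2 * k - 2 then ii ⟨a.1, ha⟩
              else if a.1 = 2 * k - 2 then s else t)
            (fun a => if ha : a.1 < 2 * k - 2 then jj ⟨a.1, ha⟩
              else if a.1 = 2 * k - 2 then j else l) *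
          ∏ a : Fin (2 * k - 2), h (ii a) (jj a)
    let T : Fin (n - 1) → Fin (n - 1) → ℝ := fun t l =>
      (1 / ((2 * k - 1).factorial : ℝ)) *
        ∑ ii : Fin (2 * k - 1) → Fin (n - 1), ∑ jj : Fin (2 * k - 1) → Fin (n - 1),
          δ (2 * k - 1 + 1) (Fin.cons t ii) (Fin.cons l jj) *
          ∏ a : Fin (2 * k - 1), h (ii a) (jj a)
    ∀ t l, 2 * ∑ s, ∑ j, P s t j l * h s j = ((2 * k - 1).factorial : ℝ) * T t l :=
  stmt_11_general n k hk h
end
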